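/- Let L > 0, ε > 0, and let k : [0,L] → ℝ be bounded away from zero (k(x) ≥ k₀ > 0), continuous at 0 and at L, and continuous outside a finite set of points of (0,L). Let α ∈ (0,1) and β₀ < β₁ in (0,1), and let (ρ₀, J₀) and (ρ₁, J₁) be generalized classical solutions of the area-averaged pedestrian boundary value problem with rates (α, β₀) and (α, β₁) respectively. Then J₀ < J₁. Likewise, for a fixed β ∈ (0,1) and α₀ < α₁ in (0,1), the corresponding fluxes satisfy J₀ < J₁. -/

import Mathlib

/-!
If `J₁ ≤ J₀`, the difference `w = ρ₀ - ρ₁` of two densities satisfies the linear differential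
inequality `ε w' ≤ (1 - ρ₀ - ρ₁) w` wherever `k` is continuous, so by the integrating factor
`exp (-∫ (1 - ρ₀ - ρ₁) / ε)` (applied piecewise between the finitely many discontinuities of `k`)
the sign of `w` at `x = 0` propagates to `x = L`. The inflow condition orders the densities at
`0`, the outflow condition turns the resulting order at `L` into `J₀ < J₁`. Comparing with the
density `ρ ≡ 0` (flux `0`) in the same way shows that every flux is positive.
-/

open Set

/-- A generalized classical solution `(ρ, J)` (with derivative `ρ'`) of the area-averaged
pedestrian boundary value problem on `[0, L]`: `ρ` is continuous, differentiable at every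
point where `k` is continuous, with `k·(−ε·ρ' + ρ(1−ρ)) = J` there, and the flux boundary
conditions `J = k(0)·α·(1−ρ(0))`, `J = k(L)·β·ρ(L)` hold. -/
def IsGeneralizedSolution (L ε α β : ℝ) (k ρ ρ' : ℝ → ℝ) (J : ℝ) : Prop :=
  ContinuousOn ρ (Icc 0 L) ∧
  (∀ x ∈ Icc (0:ℝ) L, ContinuousWithinAt k (Icc 0 L) x →
    HasDerivWithinAt ρ (ρ' x) (Icc 0 L) x ∧
    k x * (-ε * ρ' x + ρ x * (1 - ρ x)) = J) ∧
  J = k 0 * (α * (1 - ρ 0)) ∧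
  J = k L * (β * ρ L)

open Real

theorem le_of_hasDerivAt_nonpos_off_finset {u u' : ℝ → ℝ} {a b : ℝ} (S : Finset ℝ)
    (hab : a ≤ b) (hu : ContinuousOn u (Icc a b)) (hd : ∀ x ∈ Ioo a b \ ↑S, HasDerivAt u (u' x) x)
    (hnp : ∀ x ∈ Ioo a b \ ↑S, u' x ≤ 0) : u b ≤ u a := by
  induction S using Finset.induction_on generalizing a b with
  | empty =>
    simp only [Finset.coe_empty, sdiff_empty] at hd hnp
    refine antitoneOn_of_hasDerivWithinAt_nonpos (f' := u') (convex_Icc a b) hu ?_ ?_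
      (left_mem_Icc.2 hab) (right_mem_Icc.2 hab) hab
    · simpa only [interior_Icc] using fun x hx => (hd x hx).hasDerivWithinAt
    · simpa only [interior_Icc] using hnp
  | insert s S _ ih =>
    have ih' : ∀ {a' b'}, a ≤ a' → b' ≤ b → a' ≤ b' → s ∉ Ioo a' b' → u b' ≤ u a' := by
      intro a' b' ha hb hab' hs
      have hsub : Ioo a' b' \ ↑S ⊆ Ioo a b \ ↑(insert s S) := by
        rintro x ⟨hx, hxS⟩
        refine ⟨⟨ha.trans_lt hx.1, hx.2.trans_le hb⟩, ?_⟩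
        rw [Finset.coe_insert, mem_insert_iff, not_or]
        exact ⟨fun h => hs (h ▸ hx), hxS⟩
      exact ih hab' (hu.mono (Icc_subset_Icc ha hb)) (fun x hx => hd x (hsub hx))
        (fun x hx => hnp x (hsub hx))
    by_cases hs : s ∈ Ioo a b
    · calc u b ≤ u s := ih' hs.1.le le_rfl hs.2.le fun h => lt_irrefl s h.1
        _ ≤ u a := ih' le_rfl hs.2.le hs.1.le fun h => lt_irrefl s h.2
    · exact ih' le_rfl le_rfl hab hs

theorem le_exp_integral_mul_of_hasDerivAt_le_mul_off_finset {w w' c : ℝ → ℝ} {a b : ℝ}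
    (S : Finset ℝ) (hab : a ≤ b) (hw : ContinuousOn w (Icc a b)) (hc : ContinuousOn c (Icc a b))
    (hd : ∀ x ∈ Ioo a b \ ↑S, HasDerivAt w (w' x) x)
    (hle : ∀ x ∈ Ioo a b \ ↑S, w' x ≤ c x * w x) :
    w b ≤ exp (∫ x in a..b, c x) * w a := by
  set C : ℝ → ℝ := fun y => ∫ x in a..y, c x
  have hC : ContinuousOn C (Icc a b) := by
    have hci : MeasureTheory.IntegrableOn c (uIcc a b) := by
      simpa only [uIcc_of_le hab] using hc.integrableOn_Icc
    simpa only [uIcc_of_le hab] using intervalIntegral.continuousOn_primitive_interval hci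
  have hC' : ∀ x ∈ Ioo a b, HasDerivAt C (c x) x := fun x hx =>
    intervalIntegral.integral_hasDerivAt_right
      ((hc.mono (Icc_subset_Icc_right hx.2.le)).intervalIntegrable_of_Icc hx.1.le)
      ((hc.mono Ioo_subset_Icc_self).stronglyMeasurableAtFilter isOpen_Ioo x hx)
      ((hc x (Ioo_subset_Icc_self hx)).continuousAt (Icc_mem_nhds hx.1 hx.2))
  have hu : exp (-C b) * w b ≤ exp (-C a) * w a :=
    le_of_hasDerivAt_nonpos_off_finset (u' := fun x => exp (-C x) * (w' x - c x * w x)) S hab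
      ((continuous_exp.comp_continuousOn hC.neg).mul hw)
      (fun x hx => ((hC' x hx.1).neg.exp.mul (hd x hx)).congr_deriv <| by
        simp only [Pi.neg_apply]; ring)
      (fun x hx => mul_nonpos_of_nonneg_of_nonpos (exp_pos _).le (sub_nonpos.2 (hle x hx)))
  have hCa : C a = 0 := intervalIntegral.integral_same
  rwa [hCa, neg_zero, exp_zero, one_mul, exp_neg, inv_mul_le_iff₀ (exp_pos _)] at hu

/-- Without boundary conditions, the constant density `0` with flux `0` is a solution and can serve
as a comparison function. -/
def SolvesFluxEqOff (L ε : ℝ) (k ρ ρ' : ℝ → ℝ) (J : ℝ) (S : Finset ℝ) : Prop :=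
  ContinuousOn ρ (Icc 0 L) ∧
    ∀ x ∈ Ioo 0 L \ ↑S, HasDerivAt ρ (ρ' x) x ∧ k x * (-ε * ρ' x + ρ x * (1 - ρ x)) = J

theorem solvesFluxEqOff_zero (L ε : ℝ) (k : ℝ → ℝ) (S : Finset ℝ) :
    SolvesFluxEqOff L ε k (fun _ => 0) (fun _ => 0) 0 S :=
  ⟨continuousOn_const, fun x _ => ⟨hasDerivAt_const x 0, by ring⟩⟩

theorem IsGeneralizedSolution.solvesFluxEqOff {L ε α β : ℝ} {k ρ ρ' : ℝ → ℝ} {J : ℝ}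
    {S : Finset ℝ} (h : IsGeneralizedSolution L ε α β k ρ ρ' J)
    (hS : ∀ x ∈ Icc 0 L \ ↑S, ContinuousWithinAt k (Icc 0 L) x) :
    SolvesFluxEqOff L ε k ρ ρ' J S := by
  refine ⟨h.1, fun x ⟨hx, hxS⟩ => ?_⟩
  obtain ⟨hd, heq⟩ := h.2.1 x (Ioo_subset_Icc_self hx) (hS x ⟨Ioo_subset_Icc_self hx, hxS⟩)
  exact ⟨hd.hasDerivAt (Icc_mem_nhds hx.1 hx.2), heq⟩

namespace SolvesFluxEqOff

variable {L ε : ℝ} {k ρ₀ ρ₀' ρ₁ ρ₁' : ℝ → ℝ} {J₀ J₁ : ℝ} {S : Finset ℝ}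

theorem sub_le_exp_integral_mul (hL : 0 ≤ L) (hε : 0 < ε) (hk : ∀ x ∈ Ioo 0 L, 0 < k x)
    (h₀ : SolvesFluxEqOff L ε k ρ₀ ρ₀' J₀ S) (h₁ : SolvesFluxEqOff L ε k ρ₁ ρ₁' J₁ S)
    (hJ : J₁ ≤ J₀) :
    ρ₀ L - ρ₁ L ≤ exp (∫ x in (0)..L, (1 - ρ₀ x - ρ₁ x) / ε) * (ρ₀ 0 - ρ₁ 0) := by
  refine le_exp_integral_mul_of_hasDerivAt_le_mul_off_finset (w' := fun x => ρ₀' x - ρ₁' x) S hL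
    (h₀.1.sub h₁.1) (((continuousOn_const.sub h₀.1).sub h₁.1).div_const ε)
    (fun x hx => (h₀.2 x hx).1.sub (h₁.2 x hx).1) fun x hx => ?_
  obtain ⟨-, heq₀⟩ := h₀.2 x hx
  obtain ⟨-, heq₁⟩ := h₁.2 x hx
  have hode : -ε * ρ₁' x + ρ₁ x * (1 - ρ₁ x) ≤ -ε * ρ₀' x + ρ₀ x * (1 - ρ₀ x) :=
    le_of_mul_le_mul_left (heq₁.trans_le (hJ.trans heq₀.ge)) (hk x hx.1)
  rw [Pi.sub_apply, div_mul_eq_mul_div, le_div_iff₀ hε]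
  linarith

theorem right_le_of_left_le (hL : 0 ≤ L) (hε : 0 < ε) (hk : ∀ x ∈ Ioo 0 L, 0 < k x)
    (h₀ : SolvesFluxEqOff L ε k ρ₀ ρ₀' J₀ S) (h₁ : SolvesFluxEqOff L ε k ρ₁ ρ₁' J₁ S)
    (hJ : J₁ ≤ J₀) (h0 : ρ₀ 0 ≤ ρ₁ 0) : ρ₀ L ≤ ρ₁ L := by
  have := h₀.sub_le_exp_integral_mul hL hε hk h₁ hJ
  nlinarith [exp_pos (∫ x in (0)..L, (1 - ρ₀ x - ρ₁ x) / ε)]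

theorem right_lt_of_left_lt (hL : 0 ≤ L) (hε : 0 < ε) (hk : ∀ x ∈ Ioo 0 L, 0 < k x)
    (h₀ : SolvesFluxEqOff L ε k ρ₀ ρ₀' J₀ S) (h₁ : SolvesFluxEqOff L ε k ρ₁ ρ₁' J₁ S)
    (hJ : J₁ ≤ J₀) (h0 : ρ₀ 0 < ρ₁ 0) : ρ₀ L < ρ₁ L := by
  have := h₀.sub_le_exp_integral_mul hL hε hk h₁ hJ
  nlinarith [exp_pos (∫ x in (0)..L, (1 - ρ₀ x - ρ₁ x) / ε)]

end SolvesFluxEqOff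

namespace IsGeneralizedSolution

variable {L ε : ℝ} {k : ℝ → ℝ} {S : Finset ℝ}

theorem flux_pos {α β : ℝ} {ρ ρ' : ℝ → ℝ} {J : ℝ} (hL : 0 ≤ L) (hε : 0 < ε)
    (hk : ∀ x ∈ Icc 0 L, 0 < k x) (hS : ∀ x ∈ Icc 0 L \ ↑S, ContinuousWithinAt k (Icc 0 L) x)
    (hα : 0 < α) (hβ : 0 < β) (h : IsGeneralizedSolution L ε α β k ρ ρ' J) : 0 < J := by
  by_contra! hJ
  have hk0 := hk 0 (left_mem_Icc.2 hL)
  have hρ0 : 0 < ρ 0 := by nlinarith [h.2.2.1, mul_pos hk0 hα]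
  have hρL : 0 < ρ L := (solvesFluxEqOff_zero L ε k S).right_lt_of_left_lt hL hε
    (fun x hx => hk x (Ioo_subset_Icc_self hx)) (h.solvesFluxEqOff hS) hJ hρ0
  exact hJ.not_gt (h.2.2.2 ▸ mul_pos (hk L (right_mem_Icc.2 hL)) (mul_pos hβ hρL))

theorem flux_lt_of_outflow_lt {α β₀ β₁ : ℝ} {ρ₀ ρ₀' ρ₁ ρ₁' : ℝ → ℝ} {J₀ J₁ : ℝ} (hL : 0 ≤ L)
    (hε : 0 < ε) (hk : ∀ x ∈ Icc 0 L, 0 < k x)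
    (hS : ∀ x ∈ Icc 0 L \ ↑S, ContinuousWithinAt k (Icc 0 L) x)
    (hα : 0 < α) (hβ₀ : 0 < β₀) (hβ₁ : 0 < β₁) (hβ : β₀ < β₁)
    (h₀ : IsGeneralizedSolution L ε α β₀ k ρ₀ ρ₀' J₀)
    (h₁ : IsGeneralizedSolution L ε α β₁ k ρ₁ ρ₁' J₁) : J₀ < J₁ := by
  by_contra! hJ
  have hk0 := hk 0 (left_mem_Icc.2 hL)
  have hkL := hk L (right_mem_Icc.2 hL)
  have hρ₁L : 0 < ρ₁ L := by
    nlinarith [h₁.2.2.2, h₁.flux_pos hL hε hk hS hα hβ₁, mul_pos hkL hβ₁]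
  have h0 : ρ₀ 0 ≤ ρ₁ 0 := by nlinarith [h₀.2.2.1, h₁.2.2.1, mul_pos hk0 hα]
  have hLL : ρ₀ L ≤ ρ₁ L := (h₀.solvesFluxEqOff hS).right_le_of_left_le hL hε
    (fun x hx => hk x (Ioo_subset_Icc_self hx)) (h₁.solvesFluxEqOff hS) hJ h0
  exact hJ.not_gt <| calc
    J₀ = k L * (β₀ * ρ₀ L) := h₀.2.2.2
    _ ≤ k L * (β₀ * ρ₁ L) := by gcongr
    _ < k L * (β₁ * ρ₁ L) := by gcongr
    _ = J₁ := h₁.2.2.2.symm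

theorem flux_lt_of_inflow_lt {α₀ α₁ β : ℝ} {ρ₀ ρ₀' ρ₁ ρ₁' : ℝ → ℝ} {J₀ J₁ : ℝ} (hL : 0 ≤ L)
    (hε : 0 < ε) (hk : ∀ x ∈ Icc 0 L, 0 < k x)
    (hS : ∀ x ∈ Icc 0 L \ ↑S, ContinuousWithinAt k (Icc 0 L) x)
    (hα₀ : 0 < α₀) (hα₁ : 0 < α₁) (hα : α₀ < α₁) (hβ : 0 < β)
    (h₀ : IsGeneralizedSolution L ε α₀ β k ρ₀ ρ₀' J₀)
    (h₁ : IsGeneralizedSolution L ε α₁ β k ρ₁ ρ₁' J₁) : J₀ < J₁ := by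
  by_contra! hJ
  have hk0 := hk 0 (left_mem_Icc.2 hL)
  have hkL := hk L (right_mem_Icc.2 hL)
  have hρ₁0 : ρ₁ 0 < 1 := by
    nlinarith [h₁.2.2.1, h₁.flux_pos hL hε hk hS hα₁ hβ, mul_pos hk0 hα₁]
  have h0 : ρ₀ 0 < ρ₁ 0 := by
    nlinarith [h₀.2.2.1, h₁.2.2.1, mul_pos (mul_pos hk0 (sub_pos.2 hα)) (sub_pos.2 hρ₁0),
      mul_pos hk0 hα₀]
  have hLL : ρ₀ L < ρ₁ L := (h₀.solvesFluxEqOff hS).right_lt_of_left_lt hL hε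
    (fun x hx => hk x (Ioo_subset_Icc_self hx)) (h₁.solvesFluxEqOff hS) hJ h0
  exact hJ.not_gt <| calc
    J₀ = k L * (β * ρ₀ L) := h₀.2.2.2
    _ < k L * (β * ρ₁ L) := by gcongr
    _ = J₁ := h₁.2.2.2.symm

end IsGeneralizedSolution

theorem flux_monotonicity_general
    (L ε k₀ : ℝ) (k : ℝ → ℝ)
    (hL : 0 < L) (hε : 0 < ε) (hk₀ : 0 < k₀)
    (hk : ∀ x ∈ Icc (0:ℝ) L, k₀ ≤ k x)
    (hkc : ∃ S : Finset ℝ, ↑S ⊆ Ioo (0:ℝ) L ∧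
      ∀ x ∈ Icc (0:ℝ) L \ ↑S, ContinuousWithinAt k (Icc 0 L) x) :
    (∀ (α β₀ β₁ : ℝ) (ρ₀ ρ₀' ρ₁ ρ₁' : ℝ → ℝ) (J₀ J₁ : ℝ),
      α ∈ Ioo (0:ℝ) 1 → β₀ ∈ Ioo (0:ℝ) 1 → β₁ ∈ Ioo (0:ℝ) 1 → β₀ < β₁ →
      IsGeneralizedSolution L ε α β₀ k ρ₀ ρ₀' J₀ →
      IsGeneralizedSolution L ε α β₁ k ρ₁ ρ₁' J₁ →
      J₀ < J₁) ∧
    (∀ (β α₀ α₁ : ℝ) (ρ₀ ρ₀' ρ₁ ρ₁' : ℝ → ℝ) (J₀ J₁ : ℝ),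
      β ∈ Ioo (0:ℝ) 1 → α₀ ∈ Ioo (0:ℝ) 1 → α₁ ∈ Ioo (0:ℝ) 1 → α₀ < α₁ →
      IsGeneralizedSolution L ε α₀ β k ρ₀ ρ₀' J₀ →
      IsGeneralizedSolution L ε α₁ β k ρ₁ ρ₁' J₁ →
      J₀ < J₁) := by
  obtain ⟨S, -, hS⟩ := hkc
  have hkpos : ∀ x ∈ Icc 0 L, 0 < k x := fun x hx => hk₀.trans_le (hk x hx)
  exact ⟨fun _ _ _ _ _ _ _ _ _ hα hβ₀ hβ₁ hβ h₀ h₁ =>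
      h₀.flux_lt_of_outflow_lt hL.le hε hkpos hS hα.1 hβ₀.1 hβ₁.1 hβ h₁,
    fun _ _ _ _ _ _ _ _ _ hβ hα₀ hα₁ hα h₀ h₁ =>
      h₀.flux_lt_of_inflow_lt hL.le hε hkpos hS hα₀.1 hα₁.1 hα hβ.1 h₁⟩

/-- Strict monotonicity of the flux `J` with respect to the inflow and outflow rates. -/
theorem flux_monotonicity
    (L ε k₀ : ℝ) (k : ℝ → ℝ)
    (hL : 0 < L) (hε : 0 < ε) (hk₀ : 0 < k₀)
    (hk : ∀ x ∈ Icc (0:ℝ) L, k₀ ≤ k x)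
    (hk0 : ContinuousWithinAt k (Icc 0 L) 0)
    (hkL : ContinuousWithinAt k (Icc 0 L) L)
    (hkc : ∃ S : Finset ℝ, ↑S ⊆ Ioo (0:ℝ) L ∧
      ∀ x ∈ Icc (0:ℝ) L \ ↑S, ContinuousWithinAt k (Icc 0 L) x) :
    (∀ (α β₀ β₁ : ℝ) (ρ₀ ρ₀' ρ₁ ρ₁' : ℝ → ℝ) (J₀ J₁ : ℝ),
      α ∈ Ioo (0:ℝ) 1 → β₀ ∈ Ioo (0:ℝ) 1 → β₁ ∈ Ioo (0:ℝ) 1 → β₀ < β₁ →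
      IsGeneralizedSolution L ε α β₀ k ρ₀ ρ₀' J₀ →
      IsGeneralizedSolution L ε α β₁ k ρ₁ ρ₁' J₁ →
      J₀ < J₁) ∧
    (∀ (β α₀ α₁ : ℝ) (ρ₀ ρ₀' ρ₁ ρ₁' : ℝ → ℝ) (J₀ J₁ : ℝ),
      β ∈ Ioo (0:ℝ) 1 → α₀ ∈ Ioo (0:ℝ) 1 → α₁ ∈ Ioo (0:ℝ) 1 → α₀ < α₁ →
      IsGeneralizedSolution L ε α₀ β k ρ₀ ρ₀' J₀ →
      IsGeneralizedSolution L ε α₁ β k ρ₁ ρ₁' J₁ →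
      J₀ < J₁) :=
  flux_monotonicity_general L ε k₀ k hL hε hk₀ hk hkc
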